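/- Let h = g_- ⊂ so(1,n+1) (the abelian subalgebra isomorphic to ℝ^n in the parabolic) and let R ∈ Λ²V* ⊗ h satisfy h·R = 0 under the natural action. Then e_- ⌟ R = 0, i.e. R(e_-, v) = 0 for all v ∈ V = ℝ^{1,n+1}. -/

import Mathlib

/-! Since `𝔤₋` is abelian, `𝔤₋·R = 0` says that `R` is invariant under every `c̄`:
`R(c̄u, v) + R(u, c̄v) = 0`. As `c̄ e₋ = 0` and `c̄ e₊ = c`, taking `u = e₋, v = e₊` kills `R(e₋, ·)`
on `ℝⁿ`; taking `u = e₊, v = c` with `c̄ c = -|c|² e₋` gives `|c|² R(e₋, e₊) = -R(c, c) = 0`. -/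

open scoped BigOperators

/-- Minkowski space `ℝ^{1,n+1}` in a Witt basis, coordinates indexed by `Fin (n+2)`:
index `0` is `e₋`, indices `1,…,n` are the Euclidean directions, index `n+1` is `e₊`. -/
abbrev Vm (n : ℕ) : Type := Fin (n + 2) → ℝ

def lastIx (n : ℕ) : Fin (n + 2) := Fin.last (n + 1)

def midIx (n : ℕ) (i : Fin n) : Fin (n + 2) := ⟨i.1 + 1, by omega⟩

/-- The Minkowski inner product in the Witt basis. -/
noncomputable def wB (n : ℕ) (u v : Vm n) : ℝ :=
  u 0 * v (lastIx n) + u (lastIx n) * v 0 + ∑ i : Fin n, u (midIx n i) * v (midIx n i)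

noncomputable def eMinus (n : ℕ) : Vm n := Pi.single 0 1
noncomputable def ePlus (n : ℕ) : Vm n := Pi.single (lastIx n) 1
noncomputable def eMid (n : ℕ) (i : Fin n) : Vm n := Pi.single (midIx n i) 1

/-- The embedding `ℝⁿ ≃ V₀ ⊆ V`. -/
noncomputable def vmid (n : ℕ) (c : Fin n → ℝ) : Vm n := ∑ i : Fin n, c i • eMid n i

/-- Membership in `so(1,n+1)`: skew-symmetry with respect to the Minkowski product. -/
def IsSkewB (n : ℕ) (A : Module.End ℝ (Vm n)) : Prop :=
  ∀ u v : Vm n, wB n (A u) v + wB n u (A v) = 0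

/-- The element `v̄ ∈ 𝔤₋` associated with `v ∈ ℝⁿ`: `v̄ e₊ = v`, `v̄ eᵢ = -vᵢ e₋`, `v̄ e₋ = 0`. -/
noncomputable def barE (n : ℕ) (v : Fin n → ℝ) : Module.End ℝ (Vm n) :=
  (LinearMap.proj (lastIx n) : Vm n →ₗ[ℝ] ℝ).smulRight (vmid n v)
    - (∑ i : Fin n, v i • (LinearMap.proj (midIx n i) : Vm n →ₗ[ℝ] ℝ)).smulRight (eMinus n)

/-- The `ℝ`-component of the projection of `X` to `𝔤₀ ≅ ℝ ⊕ so(n)`. -/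
noncomputable def piR (n : ℕ) (X : Module.End ℝ (Vm n)) : ℝ :=
  wB n (X (eMinus n)) (ePlus n)

/-- The projection `π₋ : 𝔭 → 𝔤₋ ≅ ℝⁿ`. -/
noncomputable def piMinusE (n : ℕ) (X : Module.End ℝ (Vm n)) : Fin n → ℝ :=
  fun i => wB n (X (ePlus n)) (eMid n i)

/-- The action of the `𝔤₀ ≅ 𝔠𝔬(n)`-projection `π₀(X)` of `X` on `ℝⁿ`. -/
noncomputable def pi0Act (n : ℕ) (X : Module.End ℝ (Vm n)) (c : Fin n → ℝ) : Fin n → ℝ :=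
  fun j => piR n X * c j + ∑ i : Fin n, wB n (X (eMid n i)) (eMid n j) * c i

/-- Membership in the parabolic `𝔭 = stab(ℝ·e₋) ⊆ so(1,n+1)`. -/
def MemP (n : ℕ) (X : Module.End ℝ (Vm n)) : Prop :=
  IsSkewB n X ∧ X (eMinus n) ∈ Submodule.span ℝ {eMinus n}

attribute [local instance] LieRing.ofAssociativeRing

/-- Indecomposability: no nondegenerate invariant subspace other than `⊥` and `⊤`. -/
def Indecomp (n : ℕ) (h : LieSubalgebra ℝ (Module.End ℝ (Vm n))) : Prop :=
  ∀ W : Submodule ℝ (Vm n),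
    (∀ X ∈ h, ∀ w ∈ W, X w ∈ W) →
    (∀ w ∈ W, (∀ w' ∈ W, wB n w w' = 0) → w = 0) →
    W = ⊥ ∨ W = ⊤

section

variable (n : ℕ)

lemma midIx_eq_succ_castSucc (i : Fin n) : midIx n i = i.castSucc.succ := rfl

lemma lastIx_eq_succ_last : lastIx n = (Fin.last n).succ := rfl

@[simp] lemma eMinus_apply_lastIx : eMinus n (lastIx n) = 0 := by
  simp [eMinus, lastIx_eq_succ_last]

@[simp] lemma eMinus_apply_midIx (i : Fin n) : eMinus n (midIx n i) = 0 := by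
  simp [eMinus, midIx_eq_succ_castSucc]

@[simp] lemma ePlus_apply_lastIx : ePlus n (lastIx n) = 1 := by
  simp [ePlus]

@[simp] lemma ePlus_apply_midIx (i : Fin n) : ePlus n (midIx n i) = 0 := by
  simp [ePlus, midIx_eq_succ_castSucc, lastIx_eq_succ_last]

@[simp] lemma vmid_apply_lastIx (c : Fin n → ℝ) : vmid n c (lastIx n) = 0 := by
  simp [vmid, eMid, midIx_eq_succ_castSucc, lastIx_eq_succ_last]

@[simp] lemma vmid_apply_midIx (c : Fin n → ℝ) (j : Fin n) :
    vmid n c (midIx n j) = c j := by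
  simp [vmid, eMid, midIx_eq_succ_castSucc, Pi.single_apply]

lemma smul_eMinus_add_smul_ePlus_add_vmid (v : Vm n) :
    v 0 • eMinus n + v (lastIx n) • ePlus n + vmid n (fun i => v (midIx n i)) = v := by
  funext j
  induction j using Fin.cases with
  | zero => simp [eMinus, ePlus, vmid, eMid, midIx_eq_succ_castSucc, lastIx_eq_succ_last]
  | succ j =>
    induction j using Fin.lastCases with
    | last => rw [← lastIx_eq_succ_last]; simp
    | cast i => simp [← midIx_eq_succ_castSucc]

lemma barE_apply (c : Fin n → ℝ) (u : Vm n) :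
    barE n c u = u (lastIx n) • vmid n c - (∑ i, c i * u (midIx n i)) • eMinus n := by
  simp [barE, LinearMap.sum_apply]

@[simp] lemma barE_eMinus (c : Fin n → ℝ) : barE n c (eMinus n) = 0 := by
  simp [barE_apply]

@[simp] lemma barE_ePlus (c : Fin n → ℝ) : barE n c (ePlus n) = vmid n c := by
  simp [barE_apply]

@[simp] lemma barE_vmid (c w : Fin n → ℝ) :
    barE n c (vmid n w) = -(∑ i, c i * w i) • eMinus n := by
  simp [barE_apply]

lemma barE_lie_barE (c w : Fin n → ℝ) : ⁅barE n c, barE n w⁆ = 0 := by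
  rw [LieRing.of_associative_ring_bracket, sub_eq_zero]
  refine LinearMap.ext fun u => ?_
  simp only [Module.End.mul_apply, barE_apply n _ u, map_sub, map_smul, barE_vmid,
    barE_eMinus, smul_zero, sub_zero, mul_comm (c _) (w _)]

end

/-- Let `𝔥 = 𝔤₋ ⊂ so(1,n+1)` and let `R ∈ Λ²V* ⊗ 𝔥` satisfy `𝔥·R = 0`
under the natural action.  Then `e₋ ⌟ R = 0`, i.e. `R(e₋, v) = 0` for all `v ∈ ℝ^{1,n+1}`. -/
theorem stmt15 (n : ℕ) (hn : 1 ≤ n)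
    (R : Vm n →ₗ[ℝ] Vm n →ₗ[ℝ] Module.End ℝ (Vm n))
    (hRalt : ∀ u v : Vm n, R u v = - R v u)
    (hval : ∀ u v : Vm n, ∃ w : Fin n → ℝ, R u v = barE n w)
    (hact : ∀ c : Fin n → ℝ, ∀ u v : Vm n,
      ⁅barE n c, R u v⁆ = R ((barE n c) u) v + R u ((barE n c) v)) :
    ∀ v : Vm n, R (eMinus n) v = 0 := by
  have hdiag (u : Vm n) : R u u = 0 := by
    simpa [eq_neg_iff_add_eq_zero, ← two_smul ℝ] using hRalt u u
  have hder (c : Fin n → ℝ) (u v : Vm n) : R (barE n c u) v + R u (barE n c v) = 0 := by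
    obtain ⟨w, hw⟩ := hval u v
    rw [← hact, hw, barE_lie_barE]
  have hvmid (w : Fin n → ℝ) : R (eMinus n) (vmid n w) = 0 := by
    simpa using hder w (eMinus n) (ePlus n)
  have hePlus : R (eMinus n) (ePlus n) = 0 := by
    have h := hder 1 (ePlus n) (vmid n 1)
    rw [barE_ePlus, barE_vmid, hdiag, zero_add, map_smul, hRalt (ePlus n)] at h
    simpa [Nat.one_le_iff_ne_zero.mp hn] using h
  intro v
  rw [← smul_eMinus_add_smul_ePlus_add_vmid n v]
  simp [hdiag, hePlus, hvmid]
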